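/- arXiv:1705.01568 — 10 statements merged into one kernel-verified Lean document; each statement's English description precedes it below -/
import Mathlib

section
/- (Fisher's theorem of natural selection for the constant-fitness replicator equation.) Let u : ℝ → ℝⁿ be a differentiable solution of the constant-fitness replicator equation u̇_i = u_i(m_i − m̄(u)) whose values lie in the simplex S_n. Then for every t, the derivative of the mean fitness along the solution satisfies d/dt m̄(u(t)) = Σ_{i=1}^n m_i² u_i(t) − (Σ_{i=1}^n m_i u_i(t))², and this quantity (the population variance in fitness) is nonnegative. -/
/-! Differentiating `m̄ = ∑ mᵢ uᵢ` termwise along the replicator flow gives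
`∑ mᵢ uᵢ (mᵢ − m̄) = ∑ mᵢ² uᵢ − m̄²`, the variance of `m` under the probability weights `u`;
it is nonnegative by the Cauchy–Schwarz inequality for the weights `uᵢ`. -/

open Finset

section Replicator

variable {ι : Type*} [Fintype ι]

theorem hasDerivAt_sum_mul_of_replicator (m : ι → ℝ) (u : ℝ → ι → ℝ) (t : ℝ)
    (hode : ∀ i, HasDerivAt (fun s => u s i) (u t i * (m i - ∑ j, m j * u t j)) t) :
    HasDerivAt (fun s => ∑ i, m i * u s i)
      (∑ i, m i ^ 2 * u t i - (∑ i, m i * u t i) ^ 2) t := by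
  refine (HasDerivAt.fun_sum fun i _ => (hode i).const_mul (m i)).congr_deriv ?_
  calc ∑ i, m i * (u t i * (m i - ∑ j, m j * u t j))
      = ∑ i, (m i ^ 2 * u t i - m i * u t i * ∑ j, m j * u t j) :=
        sum_congr rfl fun i _ => by ring
    _ = ∑ i, m i ^ 2 * u t i - (∑ i, m i * u t i) ^ 2 := by
        rw [sum_sub_distrib, ← sum_mul, sq]

theorem sq_sum_mul_le_sum_sq_mul_mul_sum (m w : ι → ℝ) (hw : ∀ i, 0 ≤ w i) :
    (∑ i, m i * w i) ^ 2 ≤ (∑ i, m i ^ 2 * w i) * ∑ i, w i :=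
  sum_sq_le_sum_mul_sum_of_sq_le_mul _ (fun i _ => mul_nonneg (sq_nonneg _) (hw i))
    (fun i _ => hw i) fun i _ => le_of_eq (by ring)

end Replicator

/-- **Fisher's theorem of natural selection.** Along any differentiable
simplex-valued solution of the constant-fitness replicator equation
`u̇ᵢ = uᵢ (mᵢ − m̄(u))`, `m̄(u) = ∑ᵢ mᵢ uᵢ`, the derivative of the mean fitness equals the
population variance in fitness `∑ᵢ mᵢ² uᵢ − (∑ᵢ mᵢ uᵢ)²`, which is nonnegative. -/
theorem stmt1 (n : ℕ) (m : Fin n → ℝ) (u : ℝ → Fin n → ℝ)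
    (hS : ∀ t, (∀ i, 0 ≤ u t i) ∧ ∑ i, u t i = 1)
    (hode : ∀ i t, HasDerivAt (fun s => u s i) (u t i * (m i - ∑ j, m j * u t j)) t) :
    ∀ t, HasDerivAt (fun s => ∑ i, m i * u s i)
        (∑ i, m i ^ 2 * u t i - (∑ i, m i * u t i) ^ 2) t ∧
      0 ≤ ∑ i, m i ^ 2 * u t i - (∑ i, m i * u t i) ^ 2 := by
  intro t
  obtain ⟨hnonneg, hsum⟩ := hS t
  refine ⟨hasDerivAt_sum_mul_of_replicator m u t fun i => hode i t, ?_⟩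
  have hcs := sq_sum_mul_le_sum_sq_mul_mul_sum m (u t) hnonneg
  rw [hsum, mul_one] at hcs
  exact sub_nonneg.mpr hcs
end

section
/- Suppose m_1 > m_j for all j = 2,...,n. Let u : [0,∞) → ℝⁿ be a differentiable solution of the constant-fitness replicator equation u̇_i = u_i(m_i − m̄(u)) whose values lie in S_n and whose initial condition u(0) lies in the interior of S_n (all coordinates strictly positive). Then u(t) → e_1 = (1,0,...,0) as t → ∞. -/
/-! Each coordinate solves the scalar linear equation `ẋ = x (mᵢ - m̄(t))`, so with `F` an
antiderivative of `m̄(u(t))` we get `uᵢ(t) = uᵢ(0) e^{mᵢ t - F(t)}`. The constraint `∑ uᵢ = 1`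
eliminates `F`, leaving the softmax formula `uᵢ(t) = uᵢ(0) e^{mᵢ t} / ∑ⱼ uⱼ(0) e^{mⱼ t}`; dividing
through by `e^{m₁ t}`, every term with `j ≠ 1` decays, so only the first coordinate survives. -/

open Filter Real Set Topology

theorem exists_hasDerivAt_of_continuousOn_Ici {f : ℝ → ℝ} (hf : ContinuousOn f (Ici 0)) :
    ∃ F : ℝ → ℝ, F 0 = 0 ∧ ∀ t, 0 ≤ t → HasDerivAt F (f t) t := by
  have hg : Continuous fun s => f (max s 0) :=
    hf.comp_continuous (continuous_id.max continuous_const) fun s => le_max_right s 0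
  refine ⟨fun t => ∫ s in (0 : ℝ)..t, f (max s 0), intervalIntegral.integral_same,
    fun t ht => ?_⟩
  simpa [max_eq_left ht] using (hg.integral_hasStrictDerivAt 0 t).hasDerivAt

theorem eq_mul_exp_of_hasDerivAt_mul {x a A : ℝ → ℝ}
    (hx : ∀ t, 0 ≤ t → HasDerivAt x (x t * a t) t)
    (hA : ∀ t, 0 ≤ t → HasDerivAt A (a t) t) {t : ℝ} (ht : 0 ≤ t) :
    x t = x 0 * exp (A t - A 0) := by
  have hderiv : ∀ s, 0 ≤ s → HasDerivAt (fun s => x s * exp (-A s)) 0 s := fun s hs =>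
    ((hx s hs).mul (hA s hs).neg.exp).congr_deriv (by ring)
  have hconst := constant_of_has_deriv_right_zero
    (fun s hs => (hderiv s hs.1).continuousAt.continuousWithinAt)
    (fun s hs => (hderiv s hs.1).hasDerivWithinAt) t ⟨ht, le_rfl⟩
  calc x t = x t * exp (-A t) * exp (A t) := by rw [mul_assoc, ← exp_add]; simp
    _ = x 0 * exp (A t - A 0) := by rw [hconst, mul_assoc, ← exp_add]; ring_nf

theorem tendsto_exp_mul_atTop_nhds_zero {k : ℝ} (hk : k < 0) :
    Tendsto (fun t => exp (k * t)) atTop (𝓝 0) :=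
  tendsto_exp_atBot.comp (tendsto_id.const_mul_atTop_of_neg hk)

theorem tendsto_mul_exp_div_sum_mul_exp {ι : Type*} [Fintype ι] [DecidableEq ι]
    {w c : ι → ℝ} {i₀ : ι} (hw : w i₀ ≠ 0) (hc : ∀ j, j ≠ i₀ → c j < c i₀) :
    Tendsto (fun t i => w i * exp (c i * t) / ∑ j, w j * exp (c j * t)) atTop
      (𝓝 fun i => if i = i₀ then 1 else 0) := by
  have hterm : ∀ i, Tendsto (fun t => w i * exp ((c i - c i₀) * t)) atTop
      (𝓝 (if i = i₀ then w i₀ else 0)) := fun i => by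
    by_cases hi : i = i₀
    · subst hi; simp
    · simpa [hi] using (tendsto_exp_mul_atTop_nhds_zero (sub_neg.2 (hc i hi))).const_mul (w i)
  have hsum : Tendsto (fun t => ∑ j, w j * exp ((c j - c i₀) * t)) atTop (𝓝 (w i₀)) := by
    simpa using tendsto_finsetSum Finset.univ fun j _ => hterm j
  rw [tendsto_pi_nhds]
  intro i
  have hrescale : ∀ t, w i * exp (c i * t) / ∑ j, w j * exp (c j * t)
      = w i * exp ((c i - c i₀) * t) / ∑ j, w j * exp ((c j - c i₀) * t) := fun t => by
    simp only [sub_mul, exp_sub, ← mul_div_assoc, ← Finset.sum_div]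
    rw [div_div_div_cancel_right₀ (exp_pos _).ne']
  convert (hterm i).div hsum hw using 1
  · exact funext hrescale
  · split_ifs <;> simp [hw]

/-- If `m₁ > mⱼ` for all `j ≠ 1`, then any differentiable solution of the
constant-fitness replicator equation on `[0,∞)` with values in the simplex and with
initial condition in the interior of the simplex converges to `e₁ = (1,0,…,0)` as `t → ∞`. -/
theorem stmt2 (n : ℕ) (hn : 0 < n) (m : Fin n → ℝ)
    (hm : ∀ j, j ≠ (⟨0, hn⟩ : Fin n) → m ⟨0, hn⟩ > m j)
    (u : ℝ → Fin n → ℝ)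
    (hS : ∀ t, 0 ≤ t → (∀ i, 0 ≤ u t i) ∧ ∑ i, u t i = 1)
    (hint : ∀ i, 0 < u 0 i)
    (hode : ∀ i, ∀ t, 0 ≤ t →
      HasDerivAt (fun s => u s i) (u t i * (m i - ∑ j, m j * u t j)) t) :
    Filter.Tendsto u Filter.atTop
      (nhds (fun i => if i = (⟨0, hn⟩ : Fin n) then 1 else 0)) := by
  have hmean : ContinuousOn (fun t => ∑ j, m j * u t j) (Ici 0) :=
    continuousOn_finsetSum _ fun j _ t ht =>
      ((hode j t ht).continuousAt.continuousWithinAt).const_smul (m j)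
  obtain ⟨F, hF0, hF⟩ := exists_hasDerivAt_of_continuousOn_Ici hmean
  have hsol : ∀ t, 0 ≤ t → ∀ i, u t i = u 0 i * exp (m i * t) * exp (-F t) := fun t ht i => by
    have hexp := eq_mul_exp_of_hasDerivAt_mul (A := fun s => m i * s - F s) (hode i)
      (fun s hs => (((hasDerivAt_id' s).const_mul (m i)).sub (hF s hs)).congr_deriv (by ring)) ht
    rw [hexp, hF0, mul_assoc, ← exp_add]
    ring_nf
  have hsoftmax : ∀ᶠ t in atTop,
      (fun i => u 0 i * exp (m i * t) / ∑ j, u 0 j * exp (m j * t)) = u t := by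
    filter_upwards [eventually_ge_atTop 0] with t ht
    funext i
    rw [← div_one (u t i), ← (hS t ht).2, hsol t ht, Finset.sum_congr rfl fun j _ => hsol t ht j,
      ← Finset.sum_mul, mul_div_mul_right _ _ (exp_pos _).ne']
  exact (tendsto_mul_exp_div_sum_mul_exp (hint _).ne' hm).congr' hsoftmax
end

section
/- (Fisher's theorem for partnership games.) Let A be a symmetric n×n real matrix and let u : ℝ → ℝⁿ be a differentiable solution of the replicator equation u̇_i = u_i((Au)_i − u·Au) whose values lie in the simplex S_n. Then for every t, d/dt (u(t)·A u(t)) = 2 Σ_{i=1}^n u_i(t) ((Au(t))_i − u(t)·A u(t))², which is nonnegative; hence the mean fitness m̄(u) = u·Au is nondecreasing along solutions. -/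
/-!
For symmetric `A`, the derivative of `u ⬝ᵥ A *ᵥ u` along any curve is `2 u̇ ⬝ᵥ A *ᵥ u`. On the
replicator flow `u̇ᵢ = uᵢ (vᵢ - m)` with `v = A *ᵥ u` and `m = u ⬝ᵥ v`, the deviations `vᵢ - m`
have `u`-mean zero, so `u̇ ⬝ᵥ v` is the `u`-variance `∑ uᵢ (vᵢ - m)²` of the fitnesses, which is
nonnegative on the simplex.
-/

open Matrix

section Derivatives

variable {ι : Type*} [Fintype ι] {u v : ℝ → ι → ℝ} {u' v' : ι → ℝ} {t : ℝ}

theorem HasDerivAt.dotProduct (hu : HasDerivAt u u' t) (hv : HasDerivAt v v' t) :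
    HasDerivAt (fun s => u s ⬝ᵥ v s) (u' ⬝ᵥ v t + u t ⬝ᵥ v') t := by
  simp only [_root_.dotProduct, ← Finset.sum_add_distrib]
  exact HasDerivAt.fun_sum fun i _ => (hasDerivAt_pi.1 hu i).mul (hasDerivAt_pi.1 hv i)

theorem HasDerivAt.mulVec (A : Matrix ι ι ℝ) (hu : HasDerivAt u u' t) :
    HasDerivAt (fun s => A *ᵥ u s) (A *ᵥ u') t :=
  hasDerivAt_pi.2 fun i =>
    HasDerivAt.fun_sum fun j _ => (hasDerivAt_pi.1 hu j).const_mul (A i j)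

theorem HasDerivAt.dotProduct_mulVec_self {A : Matrix ι ι ℝ} (hA : A.IsSymm)
    (hu : HasDerivAt u u' t) :
    HasDerivAt (fun s => u s ⬝ᵥ A *ᵥ u s) (2 * (u' ⬝ᵥ A *ᵥ u t)) t := by
  have hsymm : u t ⬝ᵥ A *ᵥ u' = u' ⬝ᵥ A *ᵥ u t := by
    rw [dotProduct_mulVec, dotProduct_comm, ← mulVec_transpose, hA.eq]
  convert hu.dotProduct (hu.mulVec A) using 1
  rw [hsymm, two_mul]

end Derivatives

theorem dotProduct_replicator_eq_sum_mul_sq {ι : Type*} [Fintype ι] (x v : ι → ℝ)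
    (hx : ∑ i, x i = 1) :
    (fun i => x i * (v i - x ⬝ᵥ v)) ⬝ᵥ v = ∑ i, x i * (v i - x ⬝ᵥ v) ^ 2 := by
  have hmean : ∑ i, x i * (v i - x ⬝ᵥ v) = 0 := by
    simp only [mul_sub, Finset.sum_sub_distrib, ← Finset.sum_mul, hx, one_mul, dotProduct,
      sub_self]
  calc (fun i => x i * (v i - x ⬝ᵥ v)) ⬝ᵥ v
      = ∑ i, x i * (v i - x ⬝ᵥ v) * v i - (∑ i, x i * (v i - x ⬝ᵥ v)) * (x ⬝ᵥ v) := by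
        rw [hmean, zero_mul, sub_zero]; rfl
    _ = ∑ i, x i * (v i - x ⬝ᵥ v) ^ 2 := by
        rw [Finset.sum_mul, ← Finset.sum_sub_distrib]
        exact Finset.sum_congr rfl fun i _ => by ring

/-- **Fisher's theorem for partnership games.** For a symmetric matrix `A`,
along any differentiable simplex-valued solution of the replicator equation
`u̇ᵢ = uᵢ ((Au)ᵢ − u·Au)`, the derivative of the mean fitness `m̄(u) = u·Au` equals
`2 ∑ᵢ uᵢ ((Au)ᵢ − u·Au)²`, which is nonnegative; hence the mean fitness is nondecreasing. -/
theorem stmt4 (n : ℕ) (A : Matrix (Fin n) (Fin n) ℝ) (hA : A.IsSymm)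
    (u : ℝ → Fin n → ℝ)
    (hS : ∀ t, (∀ i, 0 ≤ u t i) ∧ ∑ i, u t i = 1)
    (hode : ∀ i t, HasDerivAt (fun s => u s i)
      (u t i * (A.mulVec (u t) i - u t ⬝ᵥ A.mulVec (u t))) t) :
    (∀ t, HasDerivAt (fun s => u s ⬝ᵥ A.mulVec (u s))
        (2 * ∑ i, u t i * (A.mulVec (u t) i - u t ⬝ᵥ A.mulVec (u t)) ^ 2) t ∧
      0 ≤ 2 * ∑ i, u t i * (A.mulVec (u t) i - u t ⬝ᵥ A.mulVec (u t)) ^ 2) ∧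
    Monotone (fun t => u t ⬝ᵥ A.mulVec (u t)) := by
  have hderiv : ∀ t, HasDerivAt (fun s => u s ⬝ᵥ A.mulVec (u s))
      (2 * ∑ i, u t i * (A.mulVec (u t) i - u t ⬝ᵥ A.mulVec (u t)) ^ 2) t := fun t => by
    rw [← dotProduct_replicator_eq_sum_mul_sq _ _ (hS t).2]
    exact (hasDerivAt_pi.2 fun i => hode i t).dotProduct_mulVec_self hA
  have hnonneg : ∀ t, 0 ≤ 2 * ∑ i, u t i * (A.mulVec (u t) i - u t ⬝ᵥ A.mulVec (u t)) ^ 2 :=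
    fun t => mul_nonneg zero_le_two <| Finset.sum_nonneg fun i _ =>
      mul_nonneg ((hS t).1 i) (sq_nonneg _)
  refine ⟨fun t => ⟨hderiv t, hnonneg t⟩, ?_⟩
  exact monotone_of_deriv_nonneg (fun t => (hderiv t).differentiableAt)
    fun t => (hderiv t).deriv ▸ hnonneg t
end

section
/- Let A be an n×n real matrix with symmetric part B = (A+Aᵀ)/2, and let u : ℝ → ℝⁿ be a differentiable solution of the replicator equation u̇_i = u_i((Au)_i − u·Au) whose values lie in the simplex S_n. Then for every t, the derivative of the mean fitness along the solution is d/dt (u(t)·A u(t)) = 2(Σ_{i=1}^n u_i(t) (Bu(t))_i (Au(t))_i − (u(t)·A u(t))²). -/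
open Matrix

/-!
Writing `m̄ = u·Au`, the product rule gives `m̄' = u'·Au + u·Au' = 2 u'·Bu`, since the quadratic
form of `A` only sees its symmetric part. Substituting the replicator field `u'ᵢ = uᵢ((Au)ᵢ − m̄)`
and using `u·Bu = u·Au = m̄` once more yields the formula.
-/

section Derivatives

variable {ι : Type*} [Fintype ι] {f g : ℝ → ι → ℝ} {f' g' : ι → ℝ} {t : ℝ}

theorem hasDerivAt_dotProduct (hf : ∀ i, HasDerivAt (fun s => f s i) (f' i) t)
    (hg : ∀ i, HasDerivAt (fun s => g s i) (g' i) t) :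
    HasDerivAt (fun s => f s ⬝ᵥ g s) (f' ⬝ᵥ g t + f t ⬝ᵥ g') t := by
  have h := HasDerivAt.fun_sum (u := Finset.univ) fun i _ => (hf i).fun_mul (hg i)
  simpa only [dotProduct, Finset.sum_add_distrib] using h

theorem hasDerivAt_mulVec_apply (A : Matrix ι ι ℝ)
    (hf : ∀ i, HasDerivAt (fun s => f s i) (f' i) t) (i : ι) :
    HasDerivAt (fun s => (A *ᵥ f s) i) ((A *ᵥ f') i) t := by
  simpa only [mulVec, dotProduct] using
    HasDerivAt.fun_sum (u := Finset.univ) fun j _ => (hf j).const_mul (A i j)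

end Derivatives

section SymmetricPart

variable {ι : Type*} [Fintype ι]

theorem dotProduct_mulVec_add_dotProduct_mulVec_swap (A : Matrix ι ι ℝ) (v w : ι → ℝ) :
    w ⬝ᵥ A *ᵥ v + v ⬝ᵥ A *ᵥ w = 2 * (w ⬝ᵥ ((1 / 2 : ℝ) • (A + Aᵀ)) *ᵥ v) := by
  rw [dotProduct_mulVec v A w, ← mulVec_transpose, dotProduct_comm _ w, smul_mulVec,
    dotProduct_smul, add_mulVec, dotProduct_add, smul_eq_mul]
  ring

theorem dotProduct_symmPart_mulVec_self (A : Matrix ι ι ℝ) (v : ι → ℝ) :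
    v ⬝ᵥ ((1 / 2 : ℝ) • (A + Aᵀ)) *ᵥ v = v ⬝ᵥ A *ᵥ v := by
  have h := dotProduct_mulVec_add_dotProduct_mulVec_swap A v v
  linarith

end SymmetricPart

theorem stmt5_general (n : ℕ) (A B : Matrix (Fin n) (Fin n) ℝ)
    (hB : B = (1 / 2 : ℝ) • (A + Aᵀ))
    (u : ℝ → Fin n → ℝ)
    (hode : ∀ i t, HasDerivAt (fun s => u s i)
      (u t i * (A.mulVec (u t) i - u t ⬝ᵥ A.mulVec (u t))) t) :
    ∀ t, HasDerivAt (fun s => u s ⬝ᵥ A.mulVec (u s))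
      (2 * (∑ i, u t i * B.mulVec (u t) i * A.mulVec (u t) i
        - (u t ⬝ᵥ A.mulVec (u t)) ^ 2)) t := by
  intro t
  have hderiv := hasDerivAt_dotProduct (hode · t) (hasDerivAt_mulVec_apply A (hode · t))
  set m := u t ⬝ᵥ A *ᵥ u t
  have hmean : u t ⬝ᵥ B *ᵥ u t = m := hB ▸ dotProduct_symmPart_mulVec_self A (u t)
  have hrate : (fun i => u t i * ((A *ᵥ u t) i - m)) ⬝ᵥ B *ᵥ u t
      = ∑ i, u t i * (B *ᵥ u t) i * (A *ᵥ u t) i - m * (u t ⬝ᵥ B *ᵥ u t) := by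
    simp only [dotProduct, Finset.mul_sum, ← Finset.sum_sub_distrib]
    exact Finset.sum_congr rfl fun i _ => by ring
  rw [hmean, ← sq] at hrate
  rwa [dotProduct_mulVec_add_dotProduct_mulVec_swap, ← hB, hrate] at hderiv

/-- For an arbitrary matrix `A` with symmetric part `B = (A + Aᵀ)/2`,
along any differentiable simplex-valued solution of the replicator equation
`u̇ᵢ = uᵢ ((Au)ᵢ − u·Au)`, the derivative of the mean fitness `m̄(u) = u·Au` equals
`2 (∑ᵢ uᵢ (Bu)ᵢ (Au)ᵢ − (u·Au)²)`. -/
theorem stmt5 (n : ℕ) (A B : Matrix (Fin n) (Fin n) ℝ)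
    (hB : B = (1 / 2 : ℝ) • (A + Aᵀ))
    (u : ℝ → Fin n → ℝ)
    (hS : ∀ t, (∀ i, 0 ≤ u t i) ∧ ∑ i, u t i = 1)
    (hode : ∀ i t, HasDerivAt (fun s => u s i)
      (u t i * (A.mulVec (u t) i - u t ⬝ᵥ A.mulVec (u t))) t) :
    ∀ t, HasDerivAt (fun s => u s ⬝ᵥ A.mulVec (u s))
      (2 * (∑ i, u t i * B.mulVec (u t) i * A.mulVec (u t) i
        - (u t ⬝ᵥ A.mulVec (u t)) ^ 2)) t :=
  stmt5_general n A B hB u hode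
end

section
/- (Theorem 2, sufficiency.) Let A = B + C be an n×n real matrix with B = (A+Aᵀ)/2 and C = (A−Aᵀ)/2. Suppose there exists an n×n real matrix M with C = MB and M𝟏 = 0. Then every û ∈ ℝⁿ with û·𝟏 = 1 satisfying the constrained critical point condition Bû = m̄(û)𝟏 also satisfies Cû = 0, and hence Aû = m̄(û)𝟏, i.e., û is an equilibrium of the replicator equation with matrix A. -/
open Matrix

namespace Matrix

variable {ι R : Type*}

theorem half_smul_add_transpose_add_half_smul_sub_transpose [DivisionRing R] [NeZero (2 : R)]
    (A : Matrix ι ι R) : (1 / 2 : R) • (A + Aᵀ) + (1 / 2 : R) • (A - Aᵀ) = A := by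
  rw [← smul_add, add_add_sub_cancel, ← two_smul R A, smul_smul,
    one_div_mul_cancel (NeZero.ne (2 : R)), one_smul]

variable [Fintype ι]

theorem mulVec_const_eq_zero [CommSemiring R] {M : Matrix ι ι R} (hM1 : M *ᵥ (fun _ => 1) = 0)
    (c : R) : M *ᵥ (fun _ => c) = 0 := by
  have hconst : (fun _ : ι => c) = c • (fun _ : ι => (1 : R)) := funext fun _ => (mul_one c).symm
  rw [hconst, mulVec_smul, hM1, smul_zero]

theorem mul_mulVec_eq_zero_of_mulVec_eq_const [CommSemiring R] {M B : Matrix ι ι R}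
    (hM1 : M *ᵥ (fun _ => 1) = 0) {u : ι → R} {c : R} (hBu : B *ᵥ u = fun _ => c) :
    (M * B) *ᵥ u = 0 := by
  rw [← mulVec_mulVec, hBu, mulVec_const_eq_zero hM1]

end Matrix

/-- **Theorem 2, sufficiency.** Let `A = B + C` with `B = (A + Aᵀ)/2` and
`C = (A − Aᵀ)/2`. If there is a matrix `M` with `C = M B` and `M𝟏 = 0`, then every `û` with
`û·𝟏 = 1` satisfying the constrained critical point condition `Bû = m̄(û)𝟏` also satisfies
`Cû = 0`, and hence `Aû = m̄(û)𝟏`, i.e. `û` is an equilibrium of the replicator equation. -/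
theorem stmt11 (n : ℕ) (A B C M : Matrix (Fin n) (Fin n) ℝ)
    (hB : B = (1 / 2 : ℝ) • (A + Aᵀ)) (hC : C = (1 / 2 : ℝ) • (A - Aᵀ))
    (hM : C = M * B) (hM1 : M.mulVec (fun _ => 1) = 0) :
    ∀ uh : Fin n → ℝ, uh ⬝ᵥ (fun _ => 1) = 1 →
      B.mulVec uh = (fun _ => uh ⬝ᵥ A.mulVec uh) →
      C.mulVec uh = 0 ∧ A.mulVec uh = (fun _ => uh ⬝ᵥ A.mulVec uh) := by
  intro uh _ hcrit
  have hCu : C *ᵥ uh = 0 := hM ▸ mul_mulVec_eq_zero_of_mulVec_eq_const hM1 hcrit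
  refine ⟨hCu, ?_⟩
  have hA : A = B + C := by
    rw [hB, hC, half_smul_add_transpose_add_half_smul_sub_transpose]
  rw [← hcrit, hA, add_mulVec, hCu, add_zero]
end

section
/- (Theorem 2, necessity.) Let A = B + C be an n×n real matrix with B = (A+Aᵀ)/2 invertible and C = (A−Aᵀ)/2. Suppose û ∈ ℝⁿ with û·𝟏 = 1 satisfies Bû = m̄(û)𝟏, Cû = 0, and m̄(û) ≠ 0. Then the matrix M := C B⁻¹ satisfies C = MB and M𝟏 = 0; that is, each row of C is a linear combination of the rows of B with coefficients μ_{ik} satisfying Σ_k μ_{ik} = 0 for each i. -/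
open Matrix

theorem Matrix.mul_nonsing_inv_mulVec_mulVec {m n α : Type*} [Fintype n] [DecidableEq n]
    [CommRing α] {B : Matrix n n α} (C : Matrix m n α) (hB : IsUnit B.det) (u : n → α) :
    (C * B⁻¹) *ᵥ (B *ᵥ u) = C *ᵥ u := by
  rw [mulVec_mulVec, nonsing_inv_mul_cancel_right B C hB]

theorem stmt12_general (n : ℕ) (A B C : Matrix (Fin n) (Fin n) ℝ)
    (hdet : IsUnit B.det)
    (uh : Fin n → ℝ)
    (heq : B.mulVec uh = (fun _ => uh ⬝ᵥ A.mulVec uh))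
    (hker : C.mulVec uh = 0) (hm : uh ⬝ᵥ A.mulVec uh ≠ 0) :
    C = (C * B⁻¹) * B ∧ (C * B⁻¹).mulVec (fun _ => 1) = 0 := by
  set m := uh ⬝ᵥ A.mulVec uh
  -- Since `m̄ ≠ 0`, `𝟏 = B (û / m̄)` with `û / m̄ ∈ ker C`.
  have hone : B *ᵥ (m⁻¹ • uh) = fun _ => 1 := by
    rw [mulVec_smul, heq]
    funext
    exact inv_mul_cancel₀ hm
  refine ⟨(nonsing_inv_mul_cancel_right B C hdet).symm, ?_⟩
  rw [← hone, mul_nonsing_inv_mulVec_mulVec C hdet, mulVec_smul, hker, smul_zero]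

/-- **Theorem 2, necessity.** Let `A = B + C` with `B = (A + Aᵀ)/2`
invertible and `C = (A − Aᵀ)/2`. If `û` with `û·𝟏 = 1` satisfies `Bû = m̄(û)𝟏`, `Cû = 0`,
and `m̄(û) ≠ 0`, then the matrix `M := C B⁻¹` satisfies `C = M B` and `M𝟏 = 0`. -/
theorem stmt12 (n : ℕ) (A B C : Matrix (Fin n) (Fin n) ℝ)
    (hB : B = (1 / 2 : ℝ) • (A + Aᵀ)) (hC : C = (1 / 2 : ℝ) • (A - Aᵀ))
    (hdet : IsUnit B.det)
    (uh : Fin n → ℝ) (h1 : uh ⬝ᵥ (fun _ => 1) = 1)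
    (heq : B.mulVec uh = (fun _ => uh ⬝ᵥ A.mulVec uh))
    (hker : C.mulVec uh = 0) (hm : uh ⬝ᵥ A.mulVec uh ≠ 0) :
    C = (C * B⁻¹) * B ∧ (C * B⁻¹).mulVec (fun _ => 1) = 0 :=
  stmt12_general n A B C hdet uh heq hker hm
end

section
/- (Corollary 1.) Let A = B + C be an n×n real matrix (B symmetric part, C skew-symmetric part) and suppose û in the interior of S_n satisfies Bû = m̄(û)𝟏 and Cû = 0. If û is a strict local maximum of the mean fitness m̄(u) = u·Au on S_n (i.e., m̄(u) < m̄(û) for all u ≠ û in some S_n-neighborhood of û), then û is evolutionarily stable: û·Au > u·Au for all u ≠ û in that neighborhood of û in S_n. -/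
/-!
Since `Cû = 0` and `Bû = m̄(û)𝟏`, the transpose `Aᵀ = B - C` sends `û` to `m̄(û)𝟏`. Hence
`û·Au = (Aᵀû)·u = m̄(û)` for every `u` in the simplex, and the evolutionary stability inequality
`û·Au > u·Au` is literally the strict maximality `m̄(û) > m̄(u)`.
-/

open Matrix

theorem transpose_eq_symmPart_sub_skewPart {n R : Type*} [Field R] [NeZero (2 : R)]
    {A B C : Matrix n n R}
    (hB : B = (1 / 2 : R) • (A + Aᵀ)) (hC : C = (1 / 2 : R) • (A - Aᵀ)) : Aᵀ = B - C := by
  rw [hB, hC, ← smul_sub, add_sub_sub_cancel, ← two_smul R Aᵀ, smul_smul,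
    one_div_mul_cancel (NeZero.ne 2), one_smul]

theorem dotProduct_mulVec_eq_of_transpose_mulVec_eq_const {m n R : Type*} [Fintype m]
    [Fintype n] [CommSemiring R] {A : Matrix m n R} {v : m → R} {u : n → R} {c : R}
    (hA : Aᵀ *ᵥ v = fun _ => c) (hu : ∑ i, u i = 1) : v ⬝ᵥ A *ᵥ u = c := by
  rw [dotProduct_mulVec, ← mulVec_transpose, hA, dotProduct_comm]
  simp only [dotProduct, mul_comm (u _) c, ← Finset.mul_sum, hu, mul_one]

theorem stmt14_general (n : ℕ) (A B C : Matrix (Fin n) (Fin n) ℝ)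
    (hB : B = (1 / 2 : ℝ) • (A + Aᵀ)) (hC : C = (1 / 2 : ℝ) • (A - Aᵀ))
    (uh : Fin n → ℝ)
    (heq : B.mulVec uh = (fun _ => uh ⬝ᵥ A.mulVec uh))
    (hker : C.mulVec uh = 0)
    (ε : ℝ)
    (hmax : ∀ u : Fin n → ℝ, (∀ i, 0 ≤ u i) → ∑ i, u i = 1 →
      u ≠ uh → dist u uh < ε → u ⬝ᵥ A.mulVec u < uh ⬝ᵥ A.mulVec uh) :
    ∀ u : Fin n → ℝ, (∀ i, 0 ≤ u i) → ∑ i, u i = 1 →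
      u ≠ uh → dist u uh < ε → uh ⬝ᵥ A.mulVec u > u ⬝ᵥ A.mulVec u := by
  intro u hu_nonneg hu_sum hne hdist
  have hAT : Aᵀ *ᵥ uh = fun _ => uh ⬝ᵥ A *ᵥ uh := by
    rw [transpose_eq_symmPart_sub_skewPart hB hC, sub_mulVec, heq, hker, sub_zero]
  rw [gt_iff_lt, dotProduct_mulVec_eq_of_transpose_mulVec_eq_const hAT hu_sum]
  exact hmax u hu_nonneg hu_sum hne hdist

/-- **Corollary 1.** Let `A = B + C` (`B` symmetric part, `C` skew-symmetric
part) and suppose `û` in the interior of the simplex satisfies `Bû = m̄(û)𝟏` and `Cû = 0`,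
with `m̄(u) = u·Au`. If `û` is a strict local maximum of the mean fitness on the simplex,
then `û` is evolutionarily stable: `û·Au > u·Au` for all `u ≠ û` in that simplex
neighborhood of `û`. -/
theorem stmt14 (n : ℕ) (A B C : Matrix (Fin n) (Fin n) ℝ)
    (hB : B = (1 / 2 : ℝ) • (A + Aᵀ)) (hC : C = (1 / 2 : ℝ) • (A - Aᵀ))
    (uh : Fin n → ℝ) (hpos : ∀ i, 0 < uh i) (hsum : ∑ i, uh i = 1)
    (heq : B.mulVec uh = (fun _ => uh ⬝ᵥ A.mulVec uh))
    (hker : C.mulVec uh = 0)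
    (ε : ℝ) (hε : 0 < ε)
    (hmax : ∀ u : Fin n → ℝ, (∀ i, 0 ≤ u i) → ∑ i, u i = 1 →
      u ≠ uh → dist u uh < ε → u ⬝ᵥ A.mulVec u < uh ⬝ᵥ A.mulVec uh) :
    ∀ u : Fin n → ℝ, (∀ i, 0 ≤ u i) → ∑ i, u i = 1 →
      u ≠ uh → dist u uh < ε → uh ⬝ᵥ A.mulVec u > u ⬝ᵥ A.mulVec u :=
  stmt14_general n A B C hB hC uh heq hker ε hmax
end

section
/- (Key step of Corollary 2.) Let A = B + C be an n×n real matrix (B symmetric part, C skew-symmetric part) such that C = MB for some matrix M with M𝟏 = 0. Suppose u* and û both lie on the hyperplane {u : u·𝟏 = 1} and satisfy Bu* = μ𝟏 (some μ ∈ ℝ) and Bû = m̄(û)𝟏. Then for every λ ∈ [0,1] the point u_λ = λu* + (1−λ)û satisfies B u_λ = (λμ + (1−λ)m̄(û))𝟏 and C u_λ = 0; consequently the replicator vector field derivative of the mean fitness vanishes along the whole segment: Σ_i (u_λ)_i (B u_λ)_i (A u_λ)_i − m̄(u_λ)² = 0 for all λ ∈ [0,1]. -/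
open Matrix

/-- **key step of Corollary 2.** Let `A = B + C` (`B` symmetric part, `C`
skew-symmetric part) with `C = M B` for some `M` with `M𝟏 = 0`. If `u*` and `û` lie on the
hyperplane `{u : u·𝟏 = 1}` and satisfy `Bu* = μ𝟏` and `Bû = m̄(û)𝟏` (`m̄(û) = û·Aû`), then
for every `λ ∈ [0,1]` the point `u_λ = λ u* + (1 − λ) û` satisfies
`B u_λ = (λμ + (1 − λ) m̄(û))𝟏` and `C u_λ = 0`; consequently the replicator derivative of
the mean fitness vanishes along the whole segment:
`∑ᵢ (u_λ)ᵢ (B u_λ)ᵢ (A u_λ)ᵢ − m̄(u_λ)² = 0`. -/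
theorem stmt15 (n : ℕ) (A B C M : Matrix (Fin n) (Fin n) ℝ)
    (hB : B = (1 / 2 : ℝ) • (A + Aᵀ)) (hC : C = (1 / 2 : ℝ) • (A - Aᵀ))
    (hM : C = M * B) (hM1 : M.mulVec (fun _ => 1) = 0)
    (ustar uh : Fin n → ℝ) (μ : ℝ)
    (h1 : ustar ⬝ᵥ (fun _ => 1) = 1) (h2 : uh ⬝ᵥ (fun _ => 1) = 1)
    (hBs : B.mulVec ustar = (fun _ => μ))
    (hBh : B.mulVec uh = (fun _ => uh ⬝ᵥ A.mulVec uh)) :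
    ∀ l ∈ Set.Icc (0 : ℝ) 1,
      B.mulVec (l • ustar + (1 - l) • uh)
          = (fun _ => l * μ + (1 - l) * (uh ⬝ᵥ A.mulVec uh)) ∧
      C.mulVec (l • ustar + (1 - l) • uh) = 0 ∧
      ∑ i, (l • ustar + (1 - l) • uh) i
          * B.mulVec (l • ustar + (1 - l) • uh) i
          * A.mulVec (l • ustar + (1 - l) • uh) i
        - ((l • ustar + (1 - l) • uh) ⬝ᵥ A.mulVec (l • ustar + (1 - l) • uh)) ^ 2 = 0 := by
  intro l _
  set m := uh ⬝ᵥ A.mulVec uh with hm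
  set u := l • ustar + (1 - l) • uh with hu
  set c := l * μ + (1 - l) * m with hc
  have hA : A = B + C := by
    rw [hB, hC]; ext i j; simp; ring
  have hBu : B.mulVec u = fun _ => c := by
    rw [hu, mulVec_add, mulVec_smul, mulVec_smul, hBs, hBh]
    ext i; simp [hc]
  have hone : (fun _ : Fin n => c) = c • (fun _ : Fin n => (1:ℝ)) := by
    ext i; simp
  have hCu : C.mulVec u = 0 := by
    rw [hM, ← mulVec_mulVec, hBu, hone, mulVec_smul, hM1, smul_zero]
  have hAu : A.mulVec u = fun _ => c := by
    rw [hA, add_mulVec, hBu, hCu]; ext i; simp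
  refine ⟨hBu, hCu, ?_⟩
  have hu1 : u ⬝ᵥ (fun _ => (1:ℝ)) = 1 := by
    rw [hu, add_dotProduct, smul_dotProduct, smul_dotProduct, h1, h2]
    simp
  have hud : u ⬝ᵥ A.mulVec u = c := by
    rw [hAu, hone, dotProduct_smul, hu1]; simp [mul_comm]
  rw [hud, hBu, hAu]
  have : ∑ i, u i * c * c = c * c := by
    rw [← Finset.sum_mul, ← Finset.sum_mul]
    have : ∑ i, u i = 1 := by simpa [dotProduct] using hu1
    rw [this]; ring
  rw [this]; ring
end

section
/- (Example 1: when the hypercycle equilibrium is a critical point of the fitness surface.) Let k₁, k₂, k₃ > 0, let A = [[0,0,k₁],[k₂,0,0],[0,k₃,0]] with skew-symmetric part C = (A−Aᵀ)/2, and let û = (m̄/k₂, m̄/k₃, m̄/k₁) with m̄ = (1/k₁+1/k₂+1/k₃)⁻¹ be the interior equilibrium. Then Cû = 0 if and only if k₁ = k₂ = k₃; equivalently, the interior equilibrium of the 3-species hypercycle coincides with a constrained critical point of the mean fitness on the hyperplane {u : u·𝟏 = 1} if and only if all rate constants are equal. -/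
/-!
At the interior equilibrium every entry of `A û` equals the mean fitness `m̄`, while
`Aᵀ û = (k₂ m̄/k₃, k₃ m̄/k₁, k₁ m̄/k₂)`. Since `C û = (A û - Aᵀ û)/2`, the condition `C û = 0` says
that each ratio `k₂/k₃`, `k₃/k₁`, `k₁/k₂` equals `1` (as `m̄ > 0`).
-/

open Matrix

section Hypercycle

variable {R : Type*} [CommRing R]

lemma hypercycle_mulVec (k₁ k₂ k₃ x y z : R) :
    !![0, 0, k₁; k₂, 0, 0; 0, k₃, 0] *ᵥ ![x, y, z] = ![k₁ * z, k₂ * x, k₃ * y] := by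
  ext i; fin_cases i <;> simp [mulVec, dotProduct, Fin.sum_univ_three]

lemma hypercycle_transpose_mulVec (k₁ k₂ k₃ x y z : R) :
    (!![0, 0, k₁; k₂, 0, 0; 0, k₃, 0])ᵀ *ᵥ ![x, y, z] = ![k₂ * y, k₃ * z, k₁ * x] := by
  ext i; fin_cases i <;> simp [mulVec, dotProduct, Fin.sum_univ_three]

end Hypercycle

lemma skewPart_mulVec_eq_zero_iff {K m n : Type*} [Field K] [NeZero (2 : K)] [Fintype n]
    (A B : Matrix m n K) (u : n → K) :
    ((1 / 2 : K) • (A - B)) *ᵥ u = 0 ↔ A *ᵥ u = B *ᵥ u := by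
  rw [smul_mulVec, sub_mulVec, smul_eq_zero, sub_eq_zero,
    or_iff_right (one_div_ne_zero two_ne_zero)]

section Equilibrium

variable {K : Type*} [Field K] {m k₁ k₂ k₃ : K}

lemma hypercycle_mulVec_equilibrium (h₁ : k₁ ≠ 0) (h₂ : k₂ ≠ 0) (h₃ : k₃ ≠ 0) :
    !![0, 0, k₁; k₂, 0, 0; 0, k₃, 0] *ᵥ ![m / k₂, m / k₃, m / k₁] = ![m, m, m] := by
  rw [hypercycle_mulVec, mul_div_cancel₀ m h₁, mul_div_cancel₀ m h₂, mul_div_cancel₀ m h₃]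

lemma mul_div_eq_self_iff (hm : m ≠ 0) (h₃ : k₃ ≠ 0) : k₂ * (m / k₃) = m ↔ k₂ = k₃ := by
  rw [mul_div_assoc', div_eq_iff h₃, mul_comm m k₃, mul_left_inj' hm]

lemma hypercycle_transpose_mulVec_equilibrium_eq_iff (hm : m ≠ 0) (h₁ : k₁ ≠ 0) (h₂ : k₂ ≠ 0)
    (h₃ : k₃ ≠ 0) :
    (!![0, 0, k₁; k₂, 0, 0; 0, k₃, 0])ᵀ *ᵥ ![m / k₂, m / k₃, m / k₁] = ![m, m, m] ↔
      k₁ = k₂ ∧ k₂ = k₃ := by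
  rw [hypercycle_transpose_mulVec]
  simp only [vecCons_inj, and_true, mul_div_eq_self_iff hm h₁, mul_div_eq_self_iff hm h₂,
    mul_div_eq_self_iff hm h₃]
  constructor
  · rintro ⟨h₂₃, -, h₁₂⟩
    exact ⟨h₁₂, h₂₃⟩
  · rintro ⟨h₁₂, h₂₃⟩
    exact ⟨h₂₃, h₂₃ ▸ h₁₂.symm, h₁₂⟩

end Equilibrium

/-- **Example 1.** For `k₁, k₂, k₃ > 0`, the 3×3 hypercycle matrix
`A = [[0,0,k₁],[k₂,0,0],[0,k₃,0]]` with skew-symmetric part `C = (A − Aᵀ)/2`, and the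
interior equilibrium `û = (m̄/k₂, m̄/k₃, m̄/k₁)` with `m̄ = (1/k₁ + 1/k₂ + 1/k₃)⁻¹`, one has
`Cû = 0` if and only if `k₁ = k₂ = k₃`; i.e., the interior equilibrium coincides with a
constrained critical point of the mean fitness on `{u : u·𝟏 = 1}` iff all rate constants
are equal. -/
theorem stmt17 (k1 k2 k3 : ℝ) (hk1 : 0 < k1) (hk2 : 0 < k2) (hk3 : 0 < k3)
    (A C : Matrix (Fin 3) (Fin 3) ℝ) (hA : A = !![0, 0, k1; k2, 0, 0; 0, k3, 0])
    (hC : C = (1 / 2 : ℝ) • (A - Aᵀ))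
    (mb : ℝ) (hmb : mb = (1 / k1 + 1 / k2 + 1 / k3)⁻¹)
    (uh : Fin 3 → ℝ) (huh : uh = ![mb / k2, mb / k3, mb / k1]) :
    C.mulVec uh = 0 ↔ (k1 = k2 ∧ k2 = k3) := by
  have hmb_ne : mb ≠ 0 := by rw [hmb]; positivity
  subst hA hC huh
  rw [skewPart_mulVec_eq_zero_iff, hypercycle_mulVec_equilibrium hk1.ne' hk2.ne' hk3.ne', eq_comm,
    hypercycle_transpose_mulVec_equilibrium_eq_iff hmb_ne hk1.ne' hk2.ne' hk3.ne']
end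

section
/- (Example 1: negative definiteness of the hypercycle fitness form on the constraint plane.) Let k₁, k₂, k₃ > 0 and let B = (1/2)[[0,k₂,k₁],[k₂,0,k₃],[k₁,k₃,0]] be the symmetric part of the 3×3 hypercycle matrix. If (k₁ − k₂)² + k₃² < 2k₃(k₁ + k₂) (equivalently (k₁ − k₂ + k₃)² < 4k₁k₃), then w·Bw < 0 for every nonzero w ∈ ℝ³ with w₁ + w₂ + w₃ = 0; i.e., the quadratic form of the mean fitness is negative definite on the plane orthogonal to 𝟏. In particular this holds for k₁ = 0.25, k₂ = 0.3, k₃ = 0.35. -/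
/-! Eliminating `w₂ = -(w₀ + w₁)` turns `w·Bw` into `-(k₁w₀² + (k₁ - k₂ + k₃)w₀w₁ + k₃w₁²)`,
a binary form whose discriminant condition is exactly `(k₁ - k₂ + k₃)² < 4k₁k₃`; completing the
square shows it is positive definite. -/

open Matrix

lemma binary_quadratic_pos {a b c x y : ℝ} (ha : 0 < a) (hdisc : b ^ 2 < 4 * a * c)
    (hxy : x ≠ 0 ∨ y ≠ 0) : 0 < a * x ^ 2 + b * x * y + c * y ^ 2 := by
  by_cases hy : y = 0
  · have hx : x ≠ 0 := hxy.resolve_right (not_not.mpr hy)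
    subst hy
    simpa using mul_pos ha (by positivity : 0 < x ^ 2)
  · have hsq : 4 * a * (a * x ^ 2 + b * x * y + c * y ^ 2)
        = (2 * a * x + b * y) ^ 2 + (4 * a * c - b ^ 2) * y ^ 2 := by ring
    have hy2 : 0 < (4 * a * c - b ^ 2) * y ^ 2 := mul_pos (sub_pos.mpr hdisc) (by positivity)
    have h4 : 0 < 4 * a * (a * x ^ 2 + b * x * y + c * y ^ 2) := by
      rw [hsq]
      positivity
    exact pos_of_mul_pos_right h4 (by positivity)

lemma dotProduct_hypercycleSymm_mulVec (k1 k2 k3 : ℝ) (w : Fin 3 → ℝ) :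
    w ⬝ᵥ ((1 / 2 : ℝ) • !![0, k2, k1; k2, 0, k3; k1, k3, 0]) *ᵥ w
      = k2 * w 0 * w 1 + k1 * w 0 * w 2 + k3 * w 1 * w 2 := by
  simp only [dotProduct, mulVec, Matrix.smul_apply, of_apply, cons_val', cons_val_fin_one,
    smul_eq_mul, Fin.sum_univ_three, cons_val_zero, cons_val_one, cons_val]
  ring

theorem stmt18_general (k1 k2 k3 : ℝ) (hk1 : 0 < k1)
    (B : Matrix (Fin 3) (Fin 3) ℝ)
    (hB : B = (1 / 2 : ℝ) • !![0, k2, k1; k2, 0, k3; k1, k3, 0])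
    (hcond : (k1 - k2) ^ 2 + k3 ^ 2 < 2 * k3 * (k1 + k2)) :
    ((k1 - k2) ^ 2 + k3 ^ 2 < 2 * k3 * (k1 + k2) ↔ (k1 - k2 + k3) ^ 2 < 4 * k1 * k3) ∧
    (∀ w : Fin 3 → ℝ, w ≠ 0 → w 0 + w 1 + w 2 = 0 → w ⬝ᵥ B.mulVec w < 0) ∧
    ((0.25 : ℝ) - 0.3) ^ 2 + (0.35 : ℝ) ^ 2 < 2 * 0.35 * (0.25 + 0.3) := by
  have hequiv : (k1 - k2) ^ 2 + k3 ^ 2 < 2 * k3 * (k1 + k2) ↔ (k1 - k2 + k3) ^ 2 < 4 * k1 * k3 :=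
    ⟨fun h => by linarith, fun h => by linarith⟩
  refine ⟨hequiv, fun w hw hsum => ?_, by norm_num⟩
  have hw2 : w 2 = -(w 0 + w 1) := by linarith
  have hw01 : w 0 ≠ 0 ∨ w 1 ≠ 0 := by
    by_contra! h
    exact hw (funext fun i => by fin_cases i <;> simp [h.1, h.2, hw2])
  have hpos := binary_quadratic_pos hk1 (hequiv.mp hcond) hw01
  rw [hB, dotProduct_hypercycleSymm_mulVec, hw2]
  linarith

/-- **Example 1: negative definiteness of the hypercycle fitness form on the
constraint plane.** For `k₁, k₂, k₃ > 0` and `B = (1/2)[[0,k₂,k₁],[k₂,0,k₃],[k₁,k₃,0]]`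
(the symmetric part of the hypercycle matrix), if `(k₁ − k₂)² + k₃² < 2k₃(k₁ + k₂)`
(equivalently, `(k₁ − k₂ + k₃)² < 4k₁k₃`), then `w·Bw < 0` for every nonzero `w ∈ ℝ³` with
`w₁ + w₂ + w₃ = 0`. In particular the hypothesis holds for `k₁ = 0.25`, `k₂ = 0.3`,
`k₃ = 0.35`. -/
theorem stmt18 (k1 k2 k3 : ℝ) (hk1 : 0 < k1) (hk2 : 0 < k2) (hk3 : 0 < k3)
    (B : Matrix (Fin 3) (Fin 3) ℝ)
    (hB : B = (1 / 2 : ℝ) • !![0, k2, k1; k2, 0, k3; k1, k3, 0])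
    (hcond : (k1 - k2) ^ 2 + k3 ^ 2 < 2 * k3 * (k1 + k2)) :
    ((k1 - k2) ^ 2 + k3 ^ 2 < 2 * k3 * (k1 + k2) ↔ (k1 - k2 + k3) ^ 2 < 4 * k1 * k3) ∧
    (∀ w : Fin 3 → ℝ, w ≠ 0 → w 0 + w 1 + w 2 = 0 → w ⬝ᵥ B.mulVec w < 0) ∧
    ((0.25 : ℝ) - 0.3) ^ 2 + (0.35 : ℝ) ^ 2 < 2 * 0.35 * (0.25 + 0.3) :=
  stmt18_general k1 k2 k3 hk1 B hB hcond
end
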